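/- Let R be a commutative ℚ-algebra equipped with a derivation D : R → R, and let u ∈ R satisfy D(u) = −u². For an integer k ≥ 1 define the operator δ_k : R → R by δ_k(f) = D(f) + k·u·f. Then for every j ≥ 0 the j-fold composition δ_k^j := δ_{k+2j−2} ∘ δ_{k+2j−4} ∘ ⋯ ∘ δ_{k+2} ∘ δ_k satisfies δ_k^j = Σ_{i=0}^{j} C(k−1+j, i)·C(j, i)·i!·u^i·D^{j−i}, where the operator u^i·D^{j−i} sends f to u^i·D^{j−i}(f). -/
import Mathlib


/-- The Maass–Shimura operator `δ_k f = D f + k·u·f`. -/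
def maassShimura {R : Type*} [CommRing R] (D : R → R) (u : R) (k : ℕ) (f : R) : R :=
  D f + (k : R) * u * f

/-- The `j`-fold composition `δ_k^j = δ_{k+2j-2} ∘ ⋯ ∘ δ_{k+2} ∘ δ_k`, defined by
`δ_k^0 = id` and `δ_k^{j+1} = δ_{k+2j} ∘ δ_k^j`. -/
def maassShimuraIter {R : Type*} [CommRing R] (D : R → R) (u : R) (k : ℕ) : ℕ → R → R
  | 0 => id
  | j + 1 => fun f => maassShimura D u (k + 2 * j) (maassShimuraIter D u k j f)

lemma ms_key (K j i : ℕ) :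
    (K + j + 1).descFactorial (i+1) * (j+1).choose (i+1)
      + i * ((K + j).descFactorial i * j.choose i)
    = (K + j).descFactorial (i+1) * j.choose (i+1)
      + (K + 1 + 2*j) * ((K + j).descFactorial i * j.choose i) := by
  rcases le_or_gt i j with h | h
  · obtain ⟨d, rfl⟩ := Nat.exists_eq_add_of_le h
    have hC := Nat.choose_succ_right_eq (i + d) i
    rw [Nat.add_sub_cancel_left] at hC
    rw [Nat.succ_descFactorial_succ, Nat.descFactorial_succ, Nat.choose_succ_succ,
      show K + (i + d) - i = K + d by omega]
    zify at hC ⊢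
    linear_combination ((K + (i + d)).descFactorial i : ℤ) * hC
  · rw [Nat.choose_eq_zero_of_lt h, Nat.choose_eq_zero_of_lt (by omega : j < i + 1),
      Nat.choose_eq_zero_of_lt (by omega : j + 1 < i + 1)]
    ring

lemma ms_Dpow {R : Type*} [CommRing R] [Algebra ℚ R] (D : Derivation ℚ R R) (u : R)
    (hu : D u = -u ^ 2) (i : ℕ) : D (u ^ i) = -(i : R) * u ^ (i + 1) := by
  cases i with
  | zero => simp
  | succ n =>
    rw [Derivation.leibniz_pow, hu]
    simp only [Nat.add_sub_cancel, smul_eq_mul, nsmul_eq_mul]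
    push_cast
    ring

-- key identity cast to R
lemma ms_keyR {R : Type*} [CommRing R] (K j i : ℕ) :
    ((K + j).choose (i+1) : R) * ((j:ℕ).choose (i+1) : R) * ((i+1).factorial : R)
      + (((K + 1 + 2*j : ℕ) : R) - (i : R)) *
        (((K + j).choose i : R) * (j.choose i : R) * (i.factorial : R))
    = ((K + j + 1).choose (i+1) : R) * ((j+1).choose (i+1) : R) * ((i+1).factorial : R) := by
  have h := ms_key K j i
  rw [Nat.descFactorial_eq_factorial_mul_choose, Nat.descFactorial_eq_factorial_mul_choose,
    Nat.descFactorial_eq_factorial_mul_choose] at h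
  have h' : ((( (i+1).factorial * (K + j + 1).choose (i+1)) * (j+1).choose (i+1)
      + i * ((i.factorial * (K + j).choose i) * j.choose i) : ℕ) : R)
      = (((i+1).factorial * (K + j).choose (i+1) * j.choose (i+1)
      + (K + 1 + 2*j) * (i.factorial * (K + j).choose i * j.choose i) : ℕ) : R) := by
    exact_mod_cast congrArg (Nat.cast : ℕ → R) h
  push_cast at h' ⊢
  linear_combination -h'

/-- Closed formula for iterated Maass–Shimura operators: if `D` is a derivation on a
commutative `ℚ`-algebra `R` and `u ∈ R` satisfies `D u = −u²`, then for `k ≥ 1`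
`δ_k^j = Σ_{i=0}^{j} C(k−1+j, i) · C(j, i) · i! · uⁱ · D^(j−i)`. -/
theorem maassShimuraIter_eq_sum {R : Type*} [CommRing R] [Algebra ℚ R]
    (D : Derivation ℚ R R) (u : R) (hu : D u = -u ^ 2) (k : ℕ) (hk : 1 ≤ k) (j : ℕ)
    (f : R) :
    maassShimuraIter (⇑D) u k j f =
      ∑ i ∈ Finset.range (j + 1),
        ((k - 1 + j).choose i : R) * (j.choose i : R) * (i.factorial : R) * u ^ i *
          (⇑D)^[j - i] f := by
  obtain ⟨K, rfl⟩ : ∃ K, k = K + 1 := ⟨k - 1, by omega⟩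
  simp only [Nat.add_sub_cancel]
  induction j with
  | zero => simp [maassShimuraIter]
  | succ j ih =>
    show maassShimura (⇑D) u (K + 1 + 2 * j) (maassShimuraIter (⇑D) u (K+1) j f) = _
    simp only [show K + (j + 1) = K + j + 1 from rfl, show ∀ i : ℕ, j + 1 - i = j + 1 - i from fun _ => rfl]
    rw [ih, maassShimura, map_sum, Finset.mul_sum, ← Finset.sum_add_distrib]
    have step : ∀ i ∈ Finset.range (j + 1),
        (D (((K + j).choose i : R) * (j.choose i : R) * (i.factorial : R) * u ^ i *
            (⇑D)^[j - i] f)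
          + ((K + 1 + 2*j : ℕ) : R) * u * (((K + j).choose i : R) * (j.choose i : R) *
            (i.factorial : R) * u ^ i * (⇑D)^[j - i] f))
        = ((K + j).choose i : R) * (j.choose i : R) * (i.factorial : R) * u ^ i *
            (⇑D)^[j + 1 - i] f
          + (((K + 1 + 2*j : ℕ) : R) - (i : R)) * (((K + j).choose i : R) * (j.choose i : R) *
            (i.factorial : R)) * u ^ (i+1) * (⇑D)^[j - i] f := by
      intro i hi
      rw [Finset.mem_range] at hi
      have h1 : D (((K + j).choose i : R) * (j.choose i : R) * (i.factorial : R) * u ^ i *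
          (⇑D)^[j - i] f)
          = ((K + j).choose i : R) * (j.choose i : R) * (i.factorial : R) *
            (D (u ^ i) * (⇑D)^[j - i] f + u ^ i * D ((⇑D)^[j - i] f)) := by
        simp only [Derivation.leibniz, Derivation.map_natCast, smul_eq_mul]
        ring
      have h2 : D ((⇑D)^[j - i] f) = (⇑D)^[j + 1 - i] f := by
        rw [show j + 1 - i = (j - i) + 1 by omega, Function.iterate_succ_apply']
      rw [h1, ms_Dpow D u hu, h2]
      ring
    rw [Finset.sum_congr rfl step, Finset.sum_add_distrib]
    have hext : ∑ i ∈ Finset.range (j + 1),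
          ((K + j).choose i : R) * (j.choose i : R) * (i.factorial : R) * u ^ i *
            (⇑D)^[j + 1 - i] f
        = ∑ i ∈ Finset.range (j + 2),
          ((K + j).choose i : R) * (j.choose i : R) * (i.factorial : R) * u ^ i *
            (⇑D)^[j + 1 - i] f := by
      rw [Finset.sum_range_succ (n := j + 1)]
      simp [Nat.choose_eq_zero_of_lt (Nat.lt_succ_self j)]
    rw [hext, Finset.sum_range_succ' _ (j + 1), Finset.sum_range_succ' _ (j + 1)]
    simp only [Nat.succ_sub_succ, pow_zero, Nat.choose_zero_right, Nat.cast_one,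
      Nat.factorial_zero, Nat.sub_zero, one_mul, mul_one]
    rw [add_right_comm, ← Finset.sum_add_distrib]
    congr 1
    refine Finset.sum_congr rfl fun i hi => ?_
    have hkey := ms_keyR (R := R) K j i
    push_cast at hkey ⊢
    linear_combination (u ^ (i + 1) * (⇑D)^[j - i] f) * hkey
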